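/- arXiv:2212.14216 — 3 statements merged into one kernel-verified Lean document; each statement's English description precedes it below -/
import Mathlib

section
/- Let ℋ be a complex Hilbert space. For each t ∈ ℝ let A_t, B_t and V_t be unitary operators on ℋ, let F be a unitary operator on ℋ, and let F♯ be a bounded partial isometry on ℋ (i.e. F♯ ∘ (F♯)* ∘ F♯ = F♯, where (F♯)* denotes the adjoint). Assume that (i) for every f ∈ ℋ, ‖A_t(B_t f) − (F♯)*(F f)‖ → 0 as t → +∞, and (ii) for every f ∈ ℋ, ‖B_t f − V_t(F f)‖ → 0 as t → +∞. Then for every g ∈ ℋ, setting f := (F♯)* g, one has ‖A_t⁻¹ f − V_t(F♯ f)‖ → 0 as t → +∞. -/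
open Filter Topology

/-- **Proposition 2.2 (abstract transfer of Dollard asymptotics).**
If `A_t B_t f → (F♯)* (F f)` and `B_t f → V_t (F f)` for all `f`, then for every `g`,
setting `f = (F♯)* g`, one has `A_t⁻¹ f - V_t (F♯ f) → 0` as `t → +∞`. -/
theorem stmt_0
    {ℋ : Type*} [NormedAddCommGroup ℋ] [InnerProductSpace ℂ ℋ] [CompleteSpace ℋ]
    (A B V : ℝ → (ℋ ≃ₗᵢ[ℂ] ℋ)) (F : ℋ ≃ₗᵢ[ℂ] ℋ) (Fsharp : ℋ →L[ℂ] ℋ)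
    (hFsharp_partial : Fsharp.comp ((ContinuousLinearMap.adjoint Fsharp).comp Fsharp) = Fsharp)
    (h1 : ∀ f : ℋ, Tendsto (fun t : ℝ => ‖A t (B t f) - ContinuousLinearMap.adjoint Fsharp (F f)‖)
      atTop (𝓝 0))
    (h2 : ∀ f : ℋ, Tendsto (fun t : ℝ => ‖B t f - V t (F f)‖) atTop (𝓝 0)) :
    ∀ g : ℋ, Tendsto
      (fun t : ℝ => ‖(A t).symm (ContinuousLinearMap.adjoint Fsharp g)
        - V t (Fsharp (ContinuousLinearMap.adjoint Fsharp g))‖) atTop (𝓝 0) := by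
  intro g
  set Fs := ContinuousLinearMap.adjoint Fsharp with hFs
  set f := Fs g with hf
  -- adjoint of the partial isometry identity
  have hadj : Fs.comp (Fsharp.comp Fs) = Fs := by
    have := congrArg ContinuousLinearMap.adjoint hFsharp_partial
    simpa [hFs, ContinuousLinearMap.adjoint_comp, ContinuousLinearMap.adjoint_adjoint,
      ContinuousLinearMap.comp_assoc] using this
  set u := F.symm (Fsharp f) with hu
  have key : Fs (F u) = f := by
    have : Fs (Fsharp (Fs g)) = Fs g := ContinuousLinearMap.ext_iff.mp hadj g
    simpa [hu, hf] using this
  have h1u := h1 u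
  rw [key] at h1u
  have h2u := h2 u
  have hFu : F u = Fsharp f := by simp [hu]
  rw [hFu] at h2u
  -- ‖A_t⁻¹ f - B_t u‖ = ‖f - A_t (B_t u)‖
  have heq : ∀ t : ℝ, ‖(A t).symm f - B t u‖ = ‖A t (B t u) - f‖ := by
    intro t
    rw [← (A t).norm_map ((A t).symm f - B t u)]
    simp [norm_sub_rev]
  have hbound : ∀ t : ℝ, ‖(A t).symm f - V t (Fsharp f)‖ ≤
      ‖A t (B t u) - f‖ + ‖B t u - V t (Fsharp f)‖ := by
    intro t
    calc ‖(A t).symm f - V t (Fsharp f)‖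
        ≤ ‖(A t).symm f - B t u‖ + ‖B t u - V t (Fsharp f)‖ := norm_sub_le_norm_sub_add_norm_sub _ _ _
      _ = ‖A t (B t u) - f‖ + ‖B t u - V t (Fsharp f)‖ := by rw [heq]
  have hsum : Tendsto (fun t : ℝ => ‖A t (B t u) - f‖ + ‖B t u - V t (Fsharp f)‖)
      atTop (𝓝 0) := by
    simpa using h1u.add h2u
  exact squeeze_zero (fun t => norm_nonneg _) hbound hsum
end

section
/- Let γ denote the Euler–Mascheroni constant and fix α ∈ ℝ. For t > 0 and λ > 0 define the complex-valued multiplier m_t(λ) := 2π / (2πα + log(λ/2) − log t + γ + iπ/2). Then for every t > 0 and λ > 0: |m_t(λ)| ≤ 4, and λ |m_t'(λ)| ≤ 8/π, where m_t'(λ) = −2π / (λ (2πα + log(λ/2) − log t + γ + iπ/2)²) is the derivative of m_t with respect to λ. -/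
/-!
The denominator `z = x + iπ/2` (with `x` real) has imaginary part `π/2`, so `‖z‖ ≥ π/2`
whatever `α`, `t` and `λ` are. Hence `‖2π / z‖ ≤ 2π / (π/2) = 4`, and since
`λ ‖m_t'(λ)‖ = 2π / ‖z‖² ≤ 2π / (π/2)² = 8/π`, the derivative bound follows as well.
-/

open Complex Real

noncomputable def multiplierDenom (α t l : ℝ) : ℂ :=
  ((2 * π * α + Real.log (l / 2) - Real.log t + Real.eulerMascheroniConstant : ℝ) : ℂ)
    + Complex.I * (π : ℝ) / 2

lemma pi_div_two_le_norm_multiplierDenom (α t l : ℝ) : π / 2 ≤ ‖multiplierDenom α t l‖ := by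
  have him : (multiplierDenom α t l).im = π / 2 := by simp [multiplierDenom]
  have h := Complex.abs_im_le_norm (multiplierDenom α t l)
  rwa [him, abs_of_pos (by positivity)] at h

lemma multiplierDenom_ne_zero (α t l : ℝ) : multiplierDenom α t l ≠ 0 :=
  norm_pos_iff.mp ((by positivity : (0 : ℝ) < π / 2).trans_le
    (pi_div_two_le_norm_multiplierDenom α t l))

lemma hasDerivAt_log_div_two {x : ℝ} (hx : x ≠ 0) :
    HasDerivAt (fun l => Real.log (l / 2)) x⁻¹ x := by
  refine ((Real.hasDerivAt_log (div_ne_zero hx two_ne_zero)).comp x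
    ((hasDerivAt_id x).div_const 2)).congr_deriv ?_
  field_simp

lemma hasDerivAt_multiplierDenom (α t : ℝ) {l : ℝ} (hl : l ≠ 0) :
    HasDerivAt (multiplierDenom α t) ((l⁻¹ : ℝ) : ℂ) l := by
  have hx := (((hasDerivAt_log_div_two hl).const_add (2 * π * α)).sub_const
    (Real.log t)).add_const Real.eulerMascheroniConstant
  exact hx.ofReal_comp.add_const _

lemma norm_two_pi_div_le_four {z : ℂ} (hz : π / 2 ≤ ‖z‖) : ‖2 * (π : ℂ) / z‖ ≤ 4 := by
  have hz0 : 0 < ‖z‖ := (by positivity : (0 : ℝ) < π / 2).trans_le hz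
  rw [norm_div, norm_mul, Complex.norm_ofNat, Complex.norm_real, norm_of_nonneg pi_pos.le,
    div_le_iff₀ hz0]
  linarith

lemma norm_two_pi_div_sq_le {z : ℂ} (hz : π / 2 ≤ ‖z‖) : ‖2 * (π : ℂ) / z ^ 2‖ ≤ 8 / π := by
  have hsq : (π / 2) ^ 2 ≤ ‖z‖ ^ 2 := pow_le_pow_left₀ (by positivity) hz 2
  rw [norm_div, norm_mul, norm_pow, Complex.norm_ofNat, Complex.norm_real,
    norm_of_nonneg pi_pos.le, div_le_div_iff₀ (by nlinarith [pi_pos]) pi_pos]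
  nlinarith [pi_pos]

lemma mul_norm_neg_div_ofReal_mul {x : ℝ} (hx : 0 < x) (c z : ℂ) :
    x * ‖-c / ((x : ℂ) * z)‖ = ‖c / z‖ := by
  rw [norm_div, norm_div, norm_neg, norm_mul, Complex.norm_real, norm_of_nonneg hx.le,
    mul_div_assoc', mul_div_mul_left _ _ hx.ne']

theorem stmt_4_general (α : ℝ) (m : ℝ → ℝ → ℂ)
    (hm : ∀ t lam : ℝ, m t lam = 2 * (π : ℂ) /
      ((2 * π * α + Real.log (lam / 2) - Real.log t + Real.eulerMascheroniConstant : ℝ)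
        + Complex.I * (π : ℝ) / 2))
    (t lam : ℝ) (hlam : 0 < lam) :
    ‖m t lam‖ ≤ 4 ∧
    HasDerivAt (m t)
      (-(2 * (π : ℂ)) / ((lam : ℂ) *
        ((2 * π * α + Real.log (lam / 2) - Real.log t + Real.eulerMascheroniConstant : ℝ)
          + Complex.I * (π : ℝ) / 2) ^ 2)) lam ∧
    lam * ‖(-(2 * (π : ℂ)) / ((lam : ℂ) *
        ((2 * π * α + Real.log (lam / 2) - Real.log t + Real.eulerMascheroniConstant : ℝ)
          + Complex.I * (π : ℝ) / 2) ^ 2))‖ ≤ 8 / π := by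
  have hz := pi_div_two_le_norm_multiplierDenom α t lam
  have hmt : m t = fun l => 2 * (π : ℂ) / multiplierDenom α t l := funext (hm t)
  refine ⟨hm t lam ▸ norm_two_pi_div_le_four hz, ?_, ?_⟩
  · rw [hmt]
    refine ((hasDerivAt_const lam (2 * (π : ℂ))).div (hasDerivAt_multiplierDenom α t hlam.ne')
      (multiplierDenom_ne_zero α t lam)).congr_deriv ?_
    change _ = -(2 * (π : ℂ)) / ((lam : ℂ) * multiplierDenom α t lam ^ 2)
    rw [ofReal_inv]
    field_simp
    ring
  · exact (mul_norm_neg_div_ofReal_mul hlam _ _).trans_le (norm_two_pi_div_sq_le hz)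

/-- **Mikhlin-type bounds for the 2d time-rescaled multiplier**
`m_t(λ) = 2π/(2πα + log(λ/2) − log t + γ + iπ/2)`: uniformly in `t > 0` and `λ > 0`,
`|m_t(λ)| ≤ 4` and `λ |m_t'(λ)| ≤ 8/π`, where
`m_t'(λ) = −2π/(λ (2πα + log(λ/2) − log t + γ + iπ/2)²)` is the derivative of `m_t`. -/
theorem stmt_4 (α : ℝ) (m : ℝ → ℝ → ℂ)
    (hm : ∀ t lam : ℝ, m t lam = 2 * (π : ℂ) /
      ((2 * π * α + Real.log (lam / 2) - Real.log t + Real.eulerMascheroniConstant : ℝ)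
        + Complex.I * (π : ℝ) / 2))
    (t lam : ℝ) (ht : 0 < t) (hlam : 0 < lam) :
    ‖m t lam‖ ≤ 4 ∧
    HasDerivAt (m t)
      (-(2 * (π : ℂ)) / ((lam : ℂ) *
        ((2 * π * α + Real.log (lam / 2) - Real.log t + Real.eulerMascheroniConstant : ℝ)
          + Complex.I * (π : ℝ) / 2) ^ 2)) lam ∧
    lam * ‖(-(2 * (π : ℂ)) / ((lam : ℂ) *
        ((2 * π * α + Real.log (lam / 2) - Real.log t + Real.eulerMascheroniConstant : ℝ)
          + Complex.I * (π : ℝ) / 2) ^ 2))‖ ≤ 8 / π :=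
  stmt_4_general α m hm t lam hlam
end

section
/- Let n ≥ 1, t > 0, and let f be a Schwartz function on ℝⁿ. Define the free Schrödinger evolution at time t by e^{itΔ}f := 𝓕⁻¹( k ↦ e^{−it|k|²} 𝓕f(k) ), where 𝓕 is the Fourier transform normalized to be unitary on L²(ℝⁿ). Then for every x ∈ ℝⁿ, (e^{itΔ}f)(x) = (2it)^{−n/2} e^{i|x|²/(4t)} (2π)^{−n/2} ∫_{ℝⁿ} e^{−i x·y/(2t)} e^{i|y|²/(4t)} f(y) dy, where (2it)^{n/2} is the principal branch complex power. Equivalently, e^{itΔ} = M_t D_t 𝓕 M_t, where M_t g(x) := e^{i|x|²/(4t)} g(x) and D_t g(x) := (2it)^{−n/2} g(x/(2t)). -/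
/-!
Replace the multiplier `e^{-it|k|²}` by the Gaussian `e^{-b|k|²}` with `Re b > 0`. Then Fubini
applies, and the `k`-integral is the Fourier transform of a Gaussian: the heat kernel
`(π/b)^{n/2} e^{-|x-y|²/(4b)}`. By dominated convergence both sides are continuous in `b` up to
the line `Re b = 0`, so the identity persists at `b = it`. There, expanding `|x-y|²` produces the
two quadratic phases, and `(2π)^{-n/2} (π/(it))^{n/2} = (2it)^{-n/2}` because `2it` lies off the
branch cut.
-/

open MeasureTheory Complex Real Filter Module
open scoped RealInnerProductSpace Topology FourierTransform

theorem Complex.ofReal_mul_cpow {r : ℝ} (hr : 0 < r) {z : ℂ} (hz : z ≠ 0) (s : ℂ) :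
    ((r : ℂ) * z) ^ s = (r : ℂ) ^ s * z ^ s := by
  have hr' : (r : ℂ) ≠ 0 := ofReal_ne_zero.mpr hr.ne'
  rw [cpow_def_of_ne_zero (mul_ne_zero hr' hz), log_ofReal_mul hr hz, cpow_def_of_ne_zero hr',
    cpow_def_of_ne_zero hz, ← Complex.exp_add, ofReal_log hr.le, add_mul]

theorem two_pi_rpow_mul_cpow_pi_div_I_mul (n : ℕ) {t : ℝ} (ht : 0 < t) :
    (((2 * π : ℝ) ^ (-(n : ℝ) / 2) : ℝ) : ℂ) * ((π : ℂ) / (I * t)) ^ ((n : ℂ) / 2)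
      = (2 * I * t) ^ (-(n : ℂ) / 2) := by
  have h2π : (0 : ℝ) < 2 * π := by positivity
  have h2It : 2 * I * (t : ℂ) ≠ 0 := by simp [I_ne_zero, ht.ne']
  have harg : (2 * I * (t : ℂ)).arg ≠ π := by
    rw [show 2 * I * (t : ℂ) = ((2 * t : ℝ) : ℂ) * I by push_cast; ring,
      arg_real_mul _ (by positivity), arg_I]
    linarith [pi_pos]
  have hsplit : (π : ℂ) / (I * t) = ((2 * π : ℝ) : ℂ) * (2 * I * t)⁻¹ := by
    field_simp; push_cast; ring
  rw [hsplit, ofReal_mul_cpow h2π (inv_ne_zero h2It), inv_cpow _ _ harg, ← cpow_neg,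
    ofReal_cpow h2π.le, ← mul_assoc, ← cpow_add _ _ (by exact_mod_cast h2π.ne')]
  push_cast
  rw [neg_div, neg_add_cancel, cpow_zero, one_mul]

theorem continuousOn_integral_cexp_neg_mul_mul {α : Type*} [MeasurableSpace α] {μ : Measure α}
    {g : α → ℂ} (hg : Integrable g μ) {q : α → ℝ} (hqm : AEMeasurable q μ) (hq : ∀ a, 0 ≤ q a) :
    ContinuousOn (fun w : ℂ => ∫ a, cexp (-w * q a) * g a ∂μ) {w | 0 ≤ w.re} := by
  refine continuousOn_of_dominated (bound := fun a => ‖g a‖) (fun w _ => ?_) (fun w hw => ?_)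
    hg.norm (ae_of_all _ fun a => by fun_prop)
  · exact ((measurable_ofReal.comp_aemeasurable hqm).const_mul (-w)).cexp.aestronglyMeasurable.mul
      hg.1
  · refine ae_of_all _ fun a => ?_
    rw [norm_mul, norm_exp]
    refine mul_le_of_le_one_left (norm_nonneg _) (Real.exp_le_one_iff.mpr ?_)
    have : (-w * (q a : ℂ)).re = -(w.re * q a) := by simp
    rw [this, neg_nonpos]
    exact mul_nonneg hw (hq a)

section InnerProductSpace

variable {V : Type*} [NormedAddCommGroup V] [InnerProductSpace ℝ V]

theorem cexp_neg_inv_four_I_mul_mul_norm_sub_sq {t : ℝ} (ht : t ≠ 0) (x y : V) :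
    cexp (-(4 * (I * t))⁻¹ * (‖x - y‖ ^ 2 : ℝ))
      = cexp (I * (‖x‖ ^ 2 : ℝ) / (4 * (t : ℝ)))
        * (cexp (-I * (⟪x, y⟫ : ℝ) / (2 * (t : ℝ)))
          * cexp (I * (‖y‖ ^ 2 : ℝ) / (4 * (t : ℝ)))) := by
  rw [← Complex.exp_add, ← Complex.exp_add, norm_sub_sq_real]
  congr 1
  have ht' : (t : ℂ) ≠ 0 := ofReal_ne_zero.mpr ht
  field_simp
  push_cast
  ring_nf
  simp only [I_sq]
  ring

variable [FiniteDimensional ℝ V] [MeasurableSpace V] [BorelSpace V]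

theorem integral_cexp_neg_inner_mul_eq_fourier (f : V → ℂ) (k : V) :
    ∫ x, cexp (-I * (⟪k, x⟫ : ℝ)) * f x = 𝓕 f ((2 * π)⁻¹ • k) := by
  rw [Real.fourier_eq']
  refine integral_congr_ae (ae_of_all _ fun x => ?_)
  dsimp only
  rw [smul_eq_mul, real_inner_smul_right, real_inner_comm]
  congr 2
  push_cast
  field_simp

theorem SchwartzMap.integrable_integral_cexp_neg_inner_mul (f : SchwartzMap V ℂ) :
    Integrable fun k : V => ∫ x, cexp (-I * (⟪k, x⟫ : ℝ)) * f x := by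
  simp_rw [integral_cexp_neg_inner_mul_eq_fourier, ← SchwartzMap.fourier_coe]
  exact (integrable_comp_smul_iff volume _ (by positivity)).mpr (𝓕 f).integrable

theorem integral_cexp_neg_mul_sq_norm_add_I_inner {b : ℂ} (hb : 0 < b.re) (z : V) :
    ∫ k : V, cexp (-b * (‖k‖ ^ 2 : ℝ) + I * (⟪z, k⟫ : ℝ))
      = (π / b) ^ (finrank ℝ V / 2 : ℂ) * cexp (-(4 * b)⁻¹ * (‖z‖ ^ 2 : ℝ)) := by
  push_cast
  rw [GaussianFourier.integral_cexp_neg_mul_sq_norm_add hb I z, I_sq]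
  ring_nf

theorem integral_cexp_neg_mul_sq_norm_mul_fourier {f : V → ℂ} (hf : Integrable f) {b : ℂ}
    (hb : 0 < b.re) (x : V) :
    ∫ k, cexp (-b * (‖k‖ ^ 2 : ℝ)) * (cexp (I * (⟪x, k⟫ : ℝ))
        * ∫ y, cexp (-I * (⟪k, y⟫ : ℝ)) * f y)
      = (π / b) ^ (finrank ℝ V / 2 : ℂ) * ∫ y, cexp (-(4 * b)⁻¹ * (‖x - y‖ ^ 2 : ℝ)) * f y := by
  set Φ : V × V → ℂ := fun p =>
    cexp (-b * (‖p.1‖ ^ 2 : ℝ) + I * (⟪x - p.2, p.1⟫ : ℝ)) * f p.2 with hΦ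
  have hΦ_eq (k y : V) : cexp (-b * (‖k‖ ^ 2 : ℝ)) * cexp (I * (⟪x, k⟫ : ℝ))
      * (cexp (-I * (⟪k, y⟫ : ℝ)) * f y) = Φ (k, y) := by
    simp only [hΦ]
    rw [inner_sub_left, real_inner_comm k y, ← Complex.exp_add, ← mul_assoc,
      ← Complex.exp_add]
    push_cast
    ring_nf
  have hgauss : Integrable fun k : V => cexp (-b * (‖k‖ ^ 2 : ℝ)) := by
    simpa using GaussianFourier.integrable_cexp_neg_mul_sq_norm_add hb 0 (0 : V)
  have hΦ_int : Integrable Φ (volume.prod volume) := by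
    refine (hgauss.norm.mul_prod hf.norm).mono' ?_ (ae_of_all _ fun p => ?_)
    · exact (by fun_prop : Continuous fun p : V × V =>
        cexp (-b * (‖p.1‖ ^ 2 : ℝ) + I * (⟪x - p.2, p.1⟫ : ℝ))).aestronglyMeasurable.mul
          hf.1.comp_snd
    · have : ‖cexp (I * (⟪x - p.2, p.1⟫ : ℝ))‖ = 1 := by simp
      simp only [hΦ, Complex.exp_add, norm_mul, this, mul_one, le_refl]
  calc ∫ k, cexp (-b * (‖k‖ ^ 2 : ℝ)) * (cexp (I * (⟪x, k⟫ : ℝ))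
        * ∫ y, cexp (-I * (⟪k, y⟫ : ℝ)) * f y)
      = ∫ k, ∫ y, Φ (k, y) := by
        refine integral_congr_ae (ae_of_all _ fun k => ?_)
        simp only [← hΦ_eq, ← integral_const_mul, mul_assoc]
    _ = ∫ y, (∫ k, cexp (-b * (‖k‖ ^ 2 : ℝ) + I * (⟪x - y, k⟫ : ℝ))) * f y := by
        rw [integral_integral_swap hΦ_int]
        refine integral_congr_ae (ae_of_all _ fun y => ?_)
        simp only [hΦ]
        exact integral_mul_const _ _
    _ = _ := by
        simp_rw [integral_cexp_neg_mul_sq_norm_add_I_inner hb, mul_assoc, integral_const_mul]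

theorem integral_cexp_neg_I_mul_sq_norm_mul_fourier {f : V → ℂ} (hf : Integrable f)
    (hFf : Integrable fun k : V => ∫ y, cexp (-I * (⟪k, y⟫ : ℝ)) * f y) {t : ℝ} (ht : t ≠ 0)
    (x : V) :
    ∫ k, cexp (-(I * t) * (‖k‖ ^ 2 : ℝ)) * (cexp (I * (⟪x, k⟫ : ℝ))
        * ∫ y, cexp (-I * (⟪k, y⟫ : ℝ)) * f y)
      = (π / (I * t)) ^ (finrank ℝ V / 2 : ℂ)
        * ∫ y, cexp (-(4 * (I * t))⁻¹ * (‖x - y‖ ^ 2 : ℝ)) * f y := by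
  have hIt : I * (t : ℂ) ≠ 0 := mul_ne_zero I_ne_zero (ofReal_ne_zero.mpr ht)
  have hmem : I * (t : ℂ) ∈ closure {w : ℂ | 0 < w.re} := by simp
  have hinv : Set.MapsTo (fun b : ℂ => (4 * b)⁻¹) {w : ℂ | 0 < w.re} {w | 0 ≤ w.re} :=
    fun b (hb : 0 < b.re) => by
      simp only [Set.mem_ofPred_eq, inv_re]
      exact div_nonneg (by simp [hb.le]) (normSq_nonneg _)
  have hinv_cont : ContinuousWithinAt (fun b : ℂ => (4 * b)⁻¹) {w : ℂ | 0 < w.re} (I * t) :=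
    ((continuousAt_const.mul continuousAt_id).inv₀
      (mul_ne_zero (by norm_num) hIt)).continuousWithinAt
  have hL : ContinuousWithinAt (fun b : ℂ => ∫ k, cexp (-b * (‖k‖ ^ 2 : ℝ))
      * (cexp (I * (⟪x, k⟫ : ℝ)) * ∫ y, cexp (-I * (⟪k, y⟫ : ℝ)) * f y))
      {w : ℂ | 0 < w.re} (I * t) := by
    refine ((continuousOn_integral_cexp_neg_mul_mul ?_ (by fun_prop) fun k => by positivity)
      (I * t) (by simp)).mono fun b (hb : 0 < b.re) => (hb.le : 0 ≤ b.re)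
    exact hFf.bdd_mul (c := 1) (by fun_prop) (ae_of_all _ fun k => by simp)
  have hR : ContinuousWithinAt (fun b : ℂ => (π / b) ^ (finrank ℝ V / 2 : ℂ)
      * ∫ y, cexp (-(4 * b)⁻¹ * (‖x - y‖ ^ 2 : ℝ)) * f y) {w : ℂ | 0 < w.re} (I * t) := by
    refine ContinuousWithinAt.mul ?_ ?_
    · refine (continuousWithinAt_const.div continuousWithinAt_id hIt).cpow
        continuousWithinAt_const (mem_slitPlane_iff.mpr (Or.inr ?_))
      simp [div_eq_mul_inv, ht]
    · exact ((continuousOn_integral_cexp_neg_mul_mul hf (by fun_prop) fun y => by positivity)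
        _ (by simp)).comp hinv_cont hinv
  have := mem_closure_iff_nhdsWithin_neBot.mp hmem
  exact tendsto_nhds_unique (hL.tendsto.congr' <|
    eventually_nhdsWithin_of_forall (s := {w : ℂ | 0 < w.re}) fun b hb =>
      integral_cexp_neg_mul_sq_norm_mul_fourier hf hb x) hR.tendsto

end InnerProductSpace

theorem stmt_9_general (n : ℕ) (t : ℝ) (ht : 0 < t)
    (f : SchwartzMap (EuclideanSpace ℝ (Fin n)) ℂ)
    (Ff : EuclideanSpace ℝ (Fin n) → ℂ)
    (hFf : ∀ k, Ff k = ((2 * π : ℝ) ^ (-(n : ℝ) / 2) : ℝ)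
      * ∫ x : EuclideanSpace ℝ (Fin n), Complex.exp (-Complex.I * (⟪k, x⟫ : ℝ)) * f x)
    (u : EuclideanSpace ℝ (Fin n) → ℂ)
    (hu : ∀ x, u x = ((2 * π : ℝ) ^ (-(n : ℝ) / 2) : ℝ)
      * ∫ k : EuclideanSpace ℝ (Fin n), Complex.exp (Complex.I * (⟪x, k⟫ : ℝ))
          * (Complex.exp (-Complex.I * (t : ℝ) * (‖k‖ ^ 2 : ℝ)) * Ff k)) :
    ∀ x : EuclideanSpace ℝ (Fin n),
      u x = (2 * Complex.I * (t : ℂ)) ^ (-(n : ℂ) / 2)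
        * Complex.exp (Complex.I * (‖x‖ ^ 2 : ℝ) / (4 * (t : ℝ)))
        * (((2 * π : ℝ) ^ (-(n : ℝ) / 2) : ℝ)
          * ∫ y : EuclideanSpace ℝ (Fin n),
              Complex.exp (-Complex.I * (⟪x, y⟫ : ℝ) / (2 * (t : ℝ)))
                * (Complex.exp (Complex.I * (‖y‖ ^ 2 : ℝ) / (4 * (t : ℝ))) * f y)) := by
  intro x
  have hkernel := integral_cexp_neg_I_mul_sq_norm_mul_fourier f.integrable
    f.integrable_integral_cexp_neg_inner_mul ht.ne' x
  rw [finrank_euclideanSpace_fin] at hkernel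
  simp_rw [cexp_neg_inv_four_I_mul_mul_norm_sub_sq ht.ne', mul_assoc, integral_const_mul]
    at hkernel
  set c : ℝ := (2 * π) ^ (-(n : ℝ) / 2) with hc
  calc u x = c * (c * ∫ k : EuclideanSpace ℝ (Fin n), cexp (-(I * t) * (‖k‖ ^ 2 : ℝ))
          * (cexp (I * (⟪x, k⟫ : ℝ)) * ∫ y, cexp (-I * (⟪k, y⟫ : ℝ)) * f y)) := by
        rw [hu x]
        congr 1
        rw [← integral_const_mul]
        refine integral_congr_ae (ae_of_all _ fun k => ?_)
        simp only [hFf k, neg_mul]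
        ring
    _ = _ := by
        rw [hkernel, ← two_pi_rpow_mul_cpow_pi_div_I_mul n ht, ← hc]
        ring

/-- **Dollard decomposition** of the free Schrödinger propagator: for a Schwartz function
`f` on `ℝⁿ` and `t > 0`, `(e^{itΔ}f)(x) = (2it)^{−n/2} e^{i|x|²/(4t)} (2π)^{−n/2}
∫ e^{−i x·y/(2t)} e^{i|y|²/(4t)} f(y) dy`, i.e. `e^{itΔ} = M_t D_t 𝓕 M_t`. -/
theorem stmt_9 (n : ℕ) (hn : 1 ≤ n) (t : ℝ) (ht : 0 < t)
    (f : SchwartzMap (EuclideanSpace ℝ (Fin n)) ℂ)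
    (Ff : EuclideanSpace ℝ (Fin n) → ℂ)
    (hFf : ∀ k, Ff k = ((2 * π : ℝ) ^ (-(n : ℝ) / 2) : ℝ)
      * ∫ x : EuclideanSpace ℝ (Fin n), Complex.exp (-Complex.I * (⟪k, x⟫ : ℝ)) * f x)
    (u : EuclideanSpace ℝ (Fin n) → ℂ)
    (hu : ∀ x, u x = ((2 * π : ℝ) ^ (-(n : ℝ) / 2) : ℝ)
      * ∫ k : EuclideanSpace ℝ (Fin n), Complex.exp (Complex.I * (⟪x, k⟫ : ℝ))
          * (Complex.exp (-Complex.I * (t : ℝ) * (‖k‖ ^ 2 : ℝ)) * Ff k)) :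
    ∀ x : EuclideanSpace ℝ (Fin n),
      u x = (2 * Complex.I * (t : ℂ)) ^ (-(n : ℂ) / 2)
        * Complex.exp (Complex.I * (‖x‖ ^ 2 : ℝ) / (4 * (t : ℝ)))
        * (((2 * π : ℝ) ^ (-(n : ℝ) / 2) : ℝ)
          * ∫ y : EuclideanSpace ℝ (Fin n),
              Complex.exp (-Complex.I * (⟪x, y⟫ : ℝ) / (2 * (t : ℝ)))
                * (Complex.exp (Complex.I * (‖y‖ ^ 2 : ℝ) / (4 * (t : ℝ))) * f y)) :=
  stmt_9_general n t ht f Ff hFf u hu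
end
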